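/- arXiv:2203.01086 — 6 statements merged into one kernel-verified Lean document; each statement's English description precedes it below -/
import Mathlib

section
/- A congruence Φ on a semiring A is prime if and only if it is both semiprime and irreducible. -/
/-- The twist product on `A × A` for a semiring `A`. -/
def twMul {A : Type*} [Semiring A] (p q : A × A) : A × A :=
  (p.1 * q.1 + p.2 * q.2, p.1 * q.2 + p.2 * q.1)

/-- Membership of a pair in a congruence. -/
def memCon {A : Type*} [Semiring A] (p : A × A) (Φ : RingCon A) : Prop := Φ p.1 p.2

/-- `Φ₁ ·tw Φ₂ ⊆ Φ`: the twist product of any element of `Φ₁` with any element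
of `Φ₂` lies in `Φ`. -/
def twSubset {A : Type*} [Semiring A] (Φ₁ Φ₂ Φ : RingCon A) : Prop :=
  ∀ p q : A × A, memCon p Φ₁ → memCon q Φ₂ → memCon (twMul p q) Φ

/-- A congruence `Φ` is semiprime if `Φ₁ = Φ` for every congruence `Φ₁`
containing `Φ` with `Φ₁ ·tw Φ₁ ⊆ Φ`. -/
def IsSemiprimeCon {A : Type*} [Semiring A] (Φ : RingCon A) : Prop :=
  ∀ Φ₁ : RingCon A, Φ ≤ Φ₁ → twSubset Φ₁ Φ₁ Φ → Φ₁ = Φ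

/-- A congruence `Φ` is prime if `Φ₁ = Φ` or `Φ₂ = Φ` for all congruences
`Φ₁, Φ₂` containing `Φ` with `Φ₁ ·tw Φ₂ ⊆ Φ`. -/
def IsPrimeCon {A : Type*} [Semiring A] (Φ : RingCon A) : Prop :=
  ∀ Φ₁ Φ₂ : RingCon A, Φ ≤ Φ₁ → Φ ≤ Φ₂ → twSubset Φ₁ Φ₂ Φ → Φ₁ = Φ ∨ Φ₂ = Φ

/-- A congruence `Φ` is irreducible if `Φ₁ = Φ` or `Φ₂ = Φ` for all congruences
`Φ₁, Φ₂` containing `Φ` whose intersection is `Φ`. -/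
def IsIrreducibleCon {A : Type*} [Semiring A] (Φ : RingCon A) : Prop :=
  ∀ Φ₁ Φ₂ : RingCon A, Φ ≤ Φ₁ → Φ ≤ Φ₂ →
    (∀ a b : A, Φ a b ↔ Φ₁ a b ∧ Φ₂ a b) → Φ₁ = Φ ∨ Φ₂ = Φ

/-- If `p ∈ Ψ` then `twMul p q ∈ Ψ` for any `q`. -/
lemma twMul_mem_left {A : Type*} [Semiring A] (Ψ : RingCon A) (p q : A × A)
    (hp : memCon p Ψ) : memCon (twMul p q) Ψ := by
  have h1 : Ψ (p.1 * q.1) (p.2 * q.1) := Ψ.mul hp (Ψ.refl q.1)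
  have h2 : Ψ (p.2 * q.2) (p.1 * q.2) := Ψ.mul (Ψ.symm hp) (Ψ.refl q.2)
  have := Ψ.add h1 h2
  simpa [memCon, twMul, add_comm] using this

/-- If `q ∈ Ψ` then `twMul p q ∈ Ψ` for any `p`. -/
lemma twMul_mem_right {A : Type*} [Semiring A] (Ψ : RingCon A) (p q : A × A)
    (hq : memCon q Ψ) : memCon (twMul p q) Ψ := by
  have h1 : Ψ (p.1 * q.1) (p.1 * q.2) := Ψ.mul (Ψ.refl p.1) hq
  have h2 : Ψ (p.2 * q.2) (p.2 * q.1) := Ψ.mul (Ψ.refl p.2) (Ψ.symm hq)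
  exact Ψ.add h1 h2

/-- A congruence on a semiring is prime iff it is both semiprime and
irreducible. -/
theorem isPrimeCon_iff_semiprime_and_irreducible {A : Type*} [Semiring A]
    (Φ : RingCon A) :
    IsPrimeCon Φ ↔ IsSemiprimeCon Φ ∧ IsIrreducibleCon Φ := by
  constructor
  · intro hP
    constructor
    · intro Φ₁ h h2
      rcases hP Φ₁ Φ₁ h h h2 with h' | h' <;> exact h'
    · intro Φ₁ Φ₂ h1 h2 hiff
      apply hP Φ₁ Φ₂ h1 h2
      intro p q hp hq
      rw [memCon, hiff]
      exact ⟨twMul_mem_left Φ₁ p q hp, twMul_mem_right Φ₂ p q hq⟩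
  · rintro ⟨hS, hI⟩ Φ₁ Φ₂ h1 h2 htw
    have hle : Φ ≤ Φ₁ ⊓ Φ₂ := le_inf h1 h2
    have hinf : Φ₁ ⊓ Φ₂ = Φ := by
      apply hS _ hle
      intro p q hp hq
      exact htw p q hp.1 hq.2
    apply hI Φ₁ Φ₂ h1 h2
    intro a b
    rw [← hinf]
    exact RingCon.inf_iff_and
end

section
/- Let A be a commutative semiring and S a multiplicative submonoid of A with 0 ∉ S. Then there exists a prime congruence Φ on A that is disjoint from the set Ŝ := (S × {0}) ∪ ({0} × S), i.e. (s,0) ∉ Φ and (0,s) ∉ Φ for every s ∈ S. -/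
/-- The equality congruence. -/
def eqRingCon (A : Type*) [Semiring A] : RingCon A where
  r := (· = ·)
  iseqv := ⟨fun _ => rfl, Eq.symm, Eq.trans⟩
  mul' := fun h1 h2 => by rw [h1, h2]
  add' := fun h1 h2 => by rw [h1, h2]

/-- Supremum of a nonempty chain of ring congruences. -/
def chainSupRingCon {A : Type*} [Semiring A] (c : Set (RingCon A))
    (hc : IsChain (· ≤ ·) c) (Φ₀ : RingCon A) (hΦ₀ : Φ₀ ∈ c) : RingCon A where
  r a b := ∃ Φ ∈ c, Φ a b
  iseqv := by
    refine ⟨fun a => ⟨Φ₀, hΦ₀, Φ₀.refl a⟩, ?_, ?_⟩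
    · rintro a b ⟨Φ, hΦ, h⟩; exact ⟨Φ, hΦ, Φ.symm h⟩
    · rintro a b d ⟨Φ, hΦ, h⟩ ⟨Ψ, hΨ, h'⟩
      rcases hc.total hΦ hΨ with hle | hle
      · exact ⟨Ψ, hΨ, Ψ.trans (hle h) h'⟩
      · exact ⟨Φ, hΦ, Φ.trans h (hle h')⟩
  mul' := by
    rintro a b x y ⟨Φ, hΦ, h⟩ ⟨Ψ, hΨ, h'⟩
    rcases hc.total hΦ hΨ with hle | hle
    · exact ⟨Ψ, hΨ, Ψ.mul (hle h) h'⟩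
    · exact ⟨Φ, hΦ, Φ.mul h (hle h')⟩
  add' := by
    rintro a b x y ⟨Φ, hΦ, h⟩ ⟨Ψ, hΨ, h'⟩
    rcases hc.total hΦ hΨ with hle | hle
    · exact ⟨Ψ, hΨ, Ψ.add (hle h) h'⟩
    · exact ⟨Φ, hΦ, Φ.add h (hle h')⟩

/-- For a multiplicative submonoid `S` of a commutative semiring `A` with
`0 ∉ S`, there is a prime congruence disjoint from `(S × {0}) ∪ ({0} × S)`. -/
theorem exists_primeCon_disjoint_of_submonoid {A : Type*} [CommSemiring A]
    (S : Submonoid A) (h0 : (0 : A) ∉ S) :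
    ∃ Φ : RingCon A, IsPrimeCon Φ ∧ ∀ s ∈ S, ¬ Φ s 0 ∧ ¬ Φ 0 s := by
  set T : Set (RingCon A) := {Φ | ∀ s ∈ S, ¬ Φ s 0 ∧ ¬ Φ 0 s} with hT
  have heq : eqRingCon A ∈ T := by
    intro s hs
    constructor
    · intro h; exact h0 (h ▸ hs)
    · intro h; exact h0 (h ▸ hs)
  obtain ⟨Φ, -, hΦT, hmax⟩ := zorn_le_nonempty₀ T (fun c hcT hc y hy => by
    refine ⟨chainSupRingCon c hc y hy, ?_, ?_⟩
    · intro s hs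
      constructor
      · rintro ⟨Ψ, hΨ, h⟩; exact (hcT hΨ s hs).1 h
      · rintro ⟨Ψ, hΨ, h⟩; exact (hcT hΨ s hs).2 h
    · intro Ψ hΨ
      rw [RingCon.le_def]
      intro a b h
      exact ⟨Ψ, hΨ, h⟩) (eqRingCon A) heq
  refine ⟨Φ, ?_, hΦT⟩
  intro Φ₁ Φ₂ h1 h2 htw
  by_contra hcon
  push_neg at hcon
  obtain ⟨hne1, hne2⟩ := hcon
  -- Φ₁ is not in T
  have hΦ₁ : ∃ s ∈ S, Φ₁ s 0 ∨ Φ₁ 0 s := by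
    by_contra h
    push_neg at h
    exact hne1 (le_antisymm (hmax (fun s hs => h s hs) h1) h1)
  have hΦ₂ : ∃ s ∈ S, Φ₂ s 0 ∨ Φ₂ 0 s := by
    by_contra h
    push_neg at h
    exact hne2 (le_antisymm (hmax (fun s hs => h s hs) h2) h2)
  obtain ⟨s, hs, hs'⟩ := hΦ₁
  obtain ⟨t, ht, ht'⟩ := hΦ₂
  have hst : s * t ∈ S := S.mul_mem hs ht
  rcases hs' with h | h <;> rcases ht' with h' | h'
  · have := htw (s, 0) (t, 0) h h'
    simp only [memCon, twMul, mul_zero, zero_mul, add_zero, zero_add] at this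
    exact (hΦT _ hst).1 this
  · have := htw (s, 0) (0, t) h h'
    simp only [memCon, twMul, mul_zero, zero_mul, add_zero, zero_add] at this
    exact (hΦT _ hst).2 this
  · have := htw (0, s) (t, 0) h h'
    simp only [memCon, twMul, mul_zero, zero_mul, add_zero, zero_add] at this
    exact (hΦT _ hst).2 (by simpa [mul_comm] using this)
  · have := htw (0, s) (0, t) h h'
    simp only [memCon, twMul, mul_zero, zero_mul, add_zero, zero_add] at this
    exact (hΦT _ hst).1 this
end

section
/- Let A be a semiring and A₀ an additive submonoid of A such that for all w ∈ A and all y₀, y₀' ∈ A₀, the equality w + y₀ + y₀' = w implies w + y₀ = w. Then the following are equivalent: (1) for all y₁, y₂ ∈ A there exists z ∈ A₀ with y₁y₂ + z = y₂y₁ (i.e. y₁y₂ ⪯₀ y₂y₁ for all y₁, y₂); (2) A is commutative. -/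
/-- Let `A` be a semiring and `A₀` an additive submonoid such that
`w + y₀ + y₀' = w` implies `w + y₀ = w` (for `y₀, y₀' ∈ A₀`). Then
`y₁y₂ ⪯₀ y₂y₁` for all `y₁, y₂` (where `x ⪯₀ y` iff `y = x + z` for some
`z ∈ A₀`) if and only if `A` is commutative. -/
theorem surpass_comm_iff_comm {A : Type*} [Semiring A] (A₀ : AddSubmonoid A)
    (hcancel : ∀ w y₀ y₀' : A, y₀ ∈ A₀ → y₀' ∈ A₀ → w + y₀ + y₀' = w → w + y₀ = w) :
    (∀ y₁ y₂ : A, ∃ z ∈ A₀, y₁ * y₂ + z = y₂ * y₁) ↔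
      (∀ y₁ y₂ : A, y₁ * y₂ = y₂ * y₁) := by
  constructor
  · intro h y₁ y₂
    obtain ⟨z, hz, hz1⟩ := h y₁ y₂
    obtain ⟨z', hz', hz2⟩ := h y₂ y₁
    have key : y₁ * y₂ + z + z' = y₁ * y₂ := by rw [hz1, hz2]
    have := hcancel (y₁ * y₂) z z' hz hz' key
    rw [this] at hz1
    exact hz1
  · intro h y₁ y₂
    exact ⟨0, A₀.zero_mem, by rw [add_zero, h]⟩
end

section
/- Let R be a commutative semiring and G a subgroup of the group of units of R. For r ∈ R write rG := {r·g : g ∈ G} (g acting via the coercion of units into R), and for subsets S, S' ⊆ R define S ⊞ S' := ⋃_{x ∈ S, y ∈ S'} (x+y)G. Then for all a, b, c ∈ R: (1) (aG ⊞ bG) ⊞ cG = aG ⊞ (bG ⊞ cG), and both sides equal ⋃_{x ∈ aG, y ∈ bG, z ∈ cG} (x+y+z)G (associativity of the Krasner coset hyperaddition); (2) a·(bG ⊞ cG) = (ab)G ⊞ (ac)G, where a·S := {a·s : s ∈ S} (distributivity of multiplication over the coset hyperaddition). -/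
/-- The coset `rG = {r·g : g ∈ G}` of `r` under a subgroup `G` of units. -/
def unitCoset {R : Type*} [CommSemiring R] (G : Subgroup Rˣ) (r : R) : Set R :=
  {x | ∃ g ∈ G, x = r * ((g : Rˣ) : R)}

/-- The Krasner coset hyperaddition: `S ⊞ S' = ⋃_{x ∈ S, y ∈ S'} (x+y)G`. -/
def cosetHadd {R : Type*} [CommSemiring R] (G : Subgroup Rˣ) (S S' : Set R) : Set R :=
  ⋃ x ∈ S, ⋃ y ∈ S', unitCoset G (x + y)

lemma krasner_left_flat {R : Type*} [CommSemiring R] (G : Subgroup Rˣ) (a b c : R) :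
    cosetHadd G (cosetHadd G (unitCoset G a) (unitCoset G b)) (unitCoset G c) =
      ⋃ x ∈ unitCoset G a, ⋃ y ∈ unitCoset G b, ⋃ z ∈ unitCoset G c,
        unitCoset G (x + y + z) := by
  ext w
  simp only [cosetHadd, unitCoset, Set.mem_iUnion, Set.mem_setOf_eq]
  constructor
  · rintro ⟨x, ⟨⟨u, ⟨⟨g, hg, rfl⟩, v, ⟨h, hh, rfl⟩, k, hk, rfl⟩⟩, z, ⟨l, hl, rfl⟩, m, hm, rfl⟩⟩
    exact ⟨a * (g * k), ⟨g * k, mul_mem hg hk, by push_cast; ring⟩,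
      b * (h * k), ⟨h * k, mul_mem hh hk, by push_cast; ring⟩,
      c * l, ⟨l, hl, rfl⟩, m, hm, by push_cast; ring⟩
  · rintro ⟨x, ⟨g, hg, rfl⟩, y, ⟨h, hh, rfl⟩, z, ⟨l, hl, rfl⟩, m, hm, rfl⟩
    exact ⟨a * g + b * h, ⟨a * g, ⟨g, hg, rfl⟩, b * h, ⟨h, hh, rfl⟩, 1, one_mem G,
      by push_cast; ring⟩, c * l, ⟨l, hl, rfl⟩, m, hm, by push_cast; ring⟩

lemma krasner_right_flat {R : Type*} [CommSemiring R] (G : Subgroup Rˣ) (a b c : R) :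
    cosetHadd G (unitCoset G a) (cosetHadd G (unitCoset G b) (unitCoset G c)) =
      ⋃ x ∈ unitCoset G a, ⋃ y ∈ unitCoset G b, ⋃ z ∈ unitCoset G c,
        unitCoset G (x + y + z) := by
  ext w
  simp only [cosetHadd, unitCoset, Set.mem_iUnion, Set.mem_setOf_eq]
  constructor
  · rintro ⟨x, ⟨g, hg, rfl⟩, y, ⟨⟨u, ⟨h, hh, rfl⟩, v, ⟨l, hl, rfl⟩, k, hk, rfl⟩, m, hm, rfl⟩⟩
    exact ⟨a * g, ⟨g, hg, rfl⟩, b * (h * k), ⟨h * k, mul_mem hh hk, by push_cast; ring⟩,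
      c * (l * k), ⟨l * k, mul_mem hl hk, by push_cast; ring⟩, m, hm, by push_cast; ring⟩
  · rintro ⟨x, ⟨g, hg, rfl⟩, y, ⟨h, hh, rfl⟩, z, ⟨l, hl, rfl⟩, m, hm, rfl⟩
    exact ⟨a * g, ⟨g, hg, rfl⟩, b * h + c * l, ⟨b * h, ⟨h, hh, rfl⟩, c * l, ⟨l, hl, rfl⟩,
      1, one_mem G, by push_cast; ring⟩, m, hm, by push_cast; ring⟩

/-- For a commutative semiring `R` and a subgroup `G ≤ Rˣ`:
(1) the coset hyperaddition of cosets is associative, both sides being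
`⋃_{x ∈ aG, y ∈ bG, z ∈ cG} (x+y+z)G`;
(2) multiplication distributes over the coset hyperaddition:
`a·(bG ⊞ cG) = (ab)G ⊞ (ac)G`. -/
theorem krasner_coset_hyperadd {R : Type*} [CommSemiring R] (G : Subgroup Rˣ)
    (a b c : R) :
    (cosetHadd G (cosetHadd G (unitCoset G a) (unitCoset G b)) (unitCoset G c) =
      cosetHadd G (unitCoset G a) (cosetHadd G (unitCoset G b) (unitCoset G c)) ∧
     cosetHadd G (cosetHadd G (unitCoset G a) (unitCoset G b)) (unitCoset G c) =
      ⋃ x ∈ unitCoset G a, ⋃ y ∈ unitCoset G b, ⋃ z ∈ unitCoset G c,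
        unitCoset G (x + y + z)) ∧
    (a * ·) '' (cosetHadd G (unitCoset G b) (unitCoset G c)) =
      cosetHadd G (unitCoset G (a * b)) (unitCoset G (a * c)) := by
  refine ⟨⟨(krasner_left_flat G a b c).trans (krasner_right_flat G a b c).symm,
    krasner_left_flat G a b c⟩, ?_⟩
  ext w
  simp only [cosetHadd, unitCoset, Set.mem_image, Set.mem_iUnion, Set.mem_setOf_eq]
  constructor
  · rintro ⟨s, ⟨x, ⟨h, hh, rfl⟩, y, ⟨l, hl, rfl⟩, k, hk, rfl⟩, rfl⟩
    exact ⟨a * b * h, ⟨h, hh, rfl⟩, a * c * l, ⟨l, hl, rfl⟩, k, hk, by ring⟩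
  · rintro ⟨x, ⟨h, hh, rfl⟩, y, ⟨l, hl, rfl⟩, k, hk, rfl⟩
    exact ⟨(b * h + c * l) * k, ⟨b * h, ⟨h, hh, rfl⟩, c * l, ⟨l, hl, rfl⟩, k, hk, rfl⟩, by ring⟩
end

section
/- Let W be a semiring, W₀ an ideal of W, and define b₁ ⪯ b₂ iff b₂ = b₁ + y for some y ∈ W₀. Let A be a sub-semiring of W contained in the center of W, and let {b_i}_{i ∈ I} ⊆ W be a (⪯)-base of W over A, meaning: (span) for every w ∈ W there exist coefficients a_i ∈ A, all but finitely many zero, with Σ_i a_i b_i ⪯ w; (independence) whenever Σ_i a_i b_i ⪯ Σ_i a'_i b_i with a_i, a'_i ∈ A all but finitely many zero, then a_i ⪯ a'_i for every i. If H is a sub-semiring of A such that {b_i} still (⪯)-spans W over H (for every w ∈ W there exist h_i ∈ H, all but finitely many zero, with Σ_i h_i b_i ⪯ w), then for every c ∈ A there exists h ∈ H with h ⪯ c. -/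
/-- The surpassing relation associated to an ideal `W₀`:
`b₁ ⪯ b₂` iff `b₂ = b₁ + y` for some `y ∈ W₀`. -/
def surp {W : Type*} [Semiring W] (W₀ : AddSubmonoid W) (b₁ b₂ : W) : Prop :=
  ∃ y ∈ W₀, b₂ = b₁ + y

/-! Write `c · b_{i₀}` as `⪯`-surpassing an `H`-combination `Σ hᵢ bᵢ`. Since `c · b_{i₀}` is itself
the `A`-combination with the single coefficient `c`, independence compares the coefficients at
`i₀` and gives `h_{i₀} ⪯ c`. For an empty index set, spanning already yields `0 ⪯ c`. -/

section SurpassingBase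

variable {W : Type*} [Semiring W] {ι : Type*}

theorem Finsupp.single_apply_mem_of_mem {M S : Type*} [Zero M] [SetLike S M] [ZeroMemClass S M]
    {s : S} {c : M} (hc : c ∈ s) (i j : ι) : Finsupp.single i c j ∈ s := by
  rcases Finsupp.single_apply_mem (a := i) (b := c) j with h | h
  · rw [h]; exact zero_mem s
  · rw [Set.mem_singleton_iff.mp h]; exact hc

theorem Finsupp.sum_single_mul (b : ι → W) (i : ι) (c : W) :
    (Finsupp.single i c).sum (fun j a => a * b j) = c * b i :=
  Finsupp.sum_single_index (zero_mul _)

theorem surp_zero_of_spans_of_isEmpty [IsEmpty ι] (W₀ : AddSubmonoid W) (b : ι → W)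
    (S : Subsemiring W) (hspan : ∀ w : W, ∃ f : ι →₀ W, (∀ i, f i ∈ S) ∧
      surp W₀ (f.sum fun i c => c * b i) w) (w : W) :
    surp W₀ 0 w := by
  obtain ⟨f, -, hf⟩ := hspan w
  rwa [Subsingleton.elim f 0, Finsupp.sum_zero_index] at hf

theorem exists_surp_of_indep_of_spans (W₀ : AddSubmonoid W) (A : Subsemiring W) (b : ι → W)
    (hindep : ∀ f g : ι →₀ W, (∀ i, f i ∈ A) → (∀ i, g i ∈ A) →
      surp W₀ (f.sum fun i c => c * b i) (g.sum fun i c => c * b i) →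
      ∀ i, surp W₀ (f i) (g i))
    (H : Subsemiring W) (hHA : H ≤ A)
    (hHspan : ∀ w : W, ∃ f : ι →₀ W, (∀ i, f i ∈ H) ∧
      surp W₀ (f.sum fun i c => c * b i) w)
    (i₀ : ι) {c : W} (hc : c ∈ A) :
    ∃ h ∈ H, surp W₀ h c := by
  obtain ⟨f, hfH, hf⟩ := hHspan (c * b i₀)
  rw [← Finsupp.sum_single_mul b i₀ c] at hf
  have hcoeff := hindep f (Finsupp.single i₀ c) (fun i => hHA (hfH i))
    (Finsupp.single_apply_mem_of_mem hc i₀) hf i₀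
  exact ⟨f i₀, hfH i₀, by rwa [Finsupp.single_eq_same] at hcoeff⟩

end SurpassingBase

theorem base_spans_implies_dominates_general {W : Type*} [Semiring W] {ι : Type*}
    (W₀ : AddSubmonoid W)
    (A : Subsemiring W)
    (b : ι → W)
    (hindep : ∀ f g : ι →₀ W, (∀ i, f i ∈ A) → (∀ i, g i ∈ A) →
      surp W₀ (f.sum fun i c => c * b i) (g.sum fun i c => c * b i) →
      ∀ i, surp W₀ (f i) (g i))
    (H : Subsemiring W) (hHA : H ≤ A)
    (hHspan : ∀ w : W, ∃ f : ι →₀ W, (∀ i, f i ∈ H) ∧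
      surp W₀ (f.sum fun i c => c * b i) w) :
    ∀ c ∈ A, ∃ h ∈ H, surp W₀ h c := by
  intro c hc
  rcases isEmpty_or_nonempty ι with _ | ⟨⟨i₀⟩⟩
  · exact ⟨0, H.zero_mem, surp_zero_of_spans_of_isEmpty W₀ b H hHspan c⟩
  · exact exists_surp_of_indep_of_spans W₀ A b hindep H hHA hHspan i₀ hc

/-- If `{b_i}` is a `(⪯)`-base of `W` over a central sub-semiring `A`,
and `{b_i}` still `(⪯)`-spans `W` over a sub-semiring `H ⊆ A`, then every
element of `A` is surpassed from below by an element of `H`. -/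
theorem base_spans_implies_dominates {W : Type*} [Semiring W] {ι : Type*}
    (W₀ : AddSubmonoid W)
    (hW₀l : ∀ w y : W, y ∈ W₀ → w * y ∈ W₀)
    (hW₀r : ∀ w y : W, y ∈ W₀ → y * w ∈ W₀)
    (A : Subsemiring W) (hAcentral : ∀ a ∈ A, ∀ w : W, a * w = w * a)
    (b : ι → W)
    (hspan : ∀ w : W, ∃ f : ι →₀ W, (∀ i, f i ∈ A) ∧
      surp W₀ (f.sum fun i c => c * b i) w)
    (hindep : ∀ f g : ι →₀ W, (∀ i, f i ∈ A) → (∀ i, g i ∈ A) →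
      surp W₀ (f.sum fun i c => c * b i) (g.sum fun i c => c * b i) →
      ∀ i, surp W₀ (f i) (g i))
    (H : Subsemiring W) (hHA : H ≤ A)
    (hHspan : ∀ w : W, ∃ f : ι →₀ W, (∀ i, f i ∈ H) ∧
      surp W₀ (f.sum fun i c => c * b i) w) :
    ∀ c ∈ A, ∃ h ∈ H, surp W₀ h c :=
  base_spans_implies_dominates_general W₀ A b hindep H hHA hHspan
end

section
/- (Artin–Tate for pairs) Let W be a semiring, W₀ an ideal of W, and define b₁ ⪯ b₂ iff b₂ = b₁ + y for some y ∈ W₀. Let A ⊆ K be sub-semirings of W with K contained in the center of W. Assume: (1) W is affine over A: there exist y₁, …, yₙ ∈ W such that for every w ∈ W there is p in the sub-semiring of W generated by A ∪ {y₁,…,yₙ} with p ⪯ w; (2) W has a finite (⪯)-base b₁, …, b_m over K: for every w ∈ W there exist k₁,…,k_m ∈ K with Σ_i k_i b_i ⪯ w, and whenever Σ_i k_i b_i ⪯ Σ_i k'_i b_i with k_i, k'_i ∈ K, then k_i ⪯ k'_i for each i. Then K is affine over A: there exists a finite subset F ⊆ K such that for every k ∈ K there is h in the sub-semiring of W generated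 by A ∪ F with h ⪯ k. -/
section Surp

variable {W : Type*} [Semiring W] {W₀ : AddSubmonoid W}

theorem surp_refl (x : W) : surp W₀ x x := ⟨0, zero_mem _, (add_zero x).symm⟩

theorem surp_trans {x y z : W} (hxy : surp W₀ x y) (hyz : surp W₀ y z) : surp W₀ x z := by
  obtain ⟨t, ht, rfl⟩ := hxy
  obtain ⟨s, hs, rfl⟩ := hyz
  exact ⟨t + s, add_mem ht hs, add_assoc _ _ _⟩

theorem surp_add {x x' z z' : W} (h : surp W₀ x z) (h' : surp W₀ x' z') :
    surp W₀ (x + x') (z + z') := by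
  obtain ⟨t, ht, rfl⟩ := h
  obtain ⟨s, hs, rfl⟩ := h'
  exact ⟨t + s, add_mem ht hs, add_add_add_comm _ _ _ _⟩

theorem surp_mul_left (hW₀l : ∀ w y : W, y ∈ W₀ → w * y ∈ W₀) (c : W) {x z : W}
    (h : surp W₀ x z) : surp W₀ (c * x) (c * z) := by
  obtain ⟨t, ht, rfl⟩ := h
  exact ⟨c * t, hW₀l c t ht, mul_add _ _ _⟩

theorem surp_mul_right (hW₀r : ∀ w y : W, y ∈ W₀ → y * w ∈ W₀) (c : W) {x z : W}
    (h : surp W₀ x z) : surp W₀ (x * c) (z * c) := by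
  obtain ⟨t, ht, rfl⟩ := h
  exact ⟨t * c, hW₀r c t ht, add_mul _ _ _⟩

theorem surp_mul (hW₀l : ∀ w y : W, y ∈ W₀ → w * y ∈ W₀)
    (hW₀r : ∀ w y : W, y ∈ W₀ → y * w ∈ W₀) {x x' z z' : W}
    (h : surp W₀ x z) (h' : surp W₀ x' z') : surp W₀ (x * x') (z * z') :=
  surp_trans (surp_mul_right hW₀r x' h) (surp_mul_left hW₀l z h')

end Surp

section Combination

variable {W : Type*} [Semiring W] {W₀ : AddSubmonoid W} {S : Subsemiring W}
  {ι : Type*} [Fintype ι] {b : ι → W}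

def SurpassesCombination (W₀ : AddSubmonoid W) (S : Subsemiring W) (b : ι → W) (w : W) :
    Prop :=
  ∃ h : ι → W, (∀ i, h i ∈ S) ∧ surp W₀ (∑ i, h i * b i) w

namespace SurpassesCombination

theorem of_surp {v w : W} (hv : SurpassesCombination W₀ S b v) (hvw : surp W₀ v w) :
    SurpassesCombination W₀ S b w :=
  let ⟨h, hS, hh⟩ := hv
  ⟨h, hS, surp_trans hh hvw⟩

theorem mono {S' : Subsemiring W} (hSS' : S ≤ S') {w : W}
    (hw : SurpassesCombination W₀ S b w) : SurpassesCombination W₀ S' b w :=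
  let ⟨h, hS, hh⟩ := hw
  ⟨h, fun i => hSS' (hS i), hh⟩

theorem zero : SurpassesCombination W₀ S b 0 :=
  ⟨0, fun _ => zero_mem S, by simpa using surp_refl (0 : W)⟩

theorem add {w w' : W} (hw : SurpassesCombination W₀ S b w)
    (hw' : SurpassesCombination W₀ S b w') : SurpassesCombination W₀ S b (w + w') := by
  obtain ⟨h, hS, hh⟩ := hw
  obtain ⟨h', hS', hh'⟩ := hw'
  refine ⟨h + h', fun i => add_mem (hS i) (hS' i), ?_⟩
  simpa only [Pi.add_apply, add_mul, Finset.sum_add_distrib] using surp_add hh hh'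

theorem sum {κ : Type*} (s : Finset κ) (f : κ → W)
    (hf : ∀ j ∈ s, SurpassesCombination W₀ S b (f j)) :
    SurpassesCombination W₀ S b (∑ j ∈ s, f j) :=
  Finset.sum_induction f _ (fun _ _ => add) zero hf

theorem mul_left (hW₀l : ∀ w y : W, y ∈ W₀ → w * y ∈ W₀) {s w : W} (hs : s ∈ S)
    (hw : SurpassesCombination W₀ S b w) : SurpassesCombination W₀ S b (s * w) := by
  obtain ⟨h, hS, hh⟩ := hw
  refine ⟨fun i => s * h i, fun i => mul_mem hs (hS i), ?_⟩
  simpa only [Finset.mul_sum, mul_assoc] using surp_mul_left hW₀l s hh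

theorem of_mem (hW₀l : ∀ w y : W, y ∈ W₀ → w * y ∈ W₀) (hone : SurpassesCombination W₀ S b 1)
    {s : W} (hs : s ∈ S) : SurpassesCombination W₀ S b s := by
  simpa only [mul_one] using mul_left hW₀l hs hone

/-- Multiplying out two combinations only needs the structure constants of `b`, because the
coefficients commute with the `bᵢ`. -/
theorem mul (hW₀l : ∀ w y : W, y ∈ W₀ → w * y ∈ W₀) (hW₀r : ∀ w y : W, y ∈ W₀ → y * w ∈ W₀)
    (hScentral : ∀ s ∈ S, ∀ w : W, s * w = w * s)
    (hb : ∀ i j, SurpassesCombination W₀ S b (b i * b j)) {w w' : W}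
    (hw : SurpassesCombination W₀ S b w) (hw' : SurpassesCombination W₀ S b w') :
    SurpassesCombination W₀ S b (w * w') := by
  obtain ⟨h, hS, hh⟩ := hw
  obtain ⟨h', hS', hh'⟩ := hw'
  have hexpand : (∑ i, h i * b i) * (∑ j, h' j * b j) =
      ∑ i, ∑ j, h i * (h' j * (b i * b j)) := by
    rw [Finset.sum_mul_sum]
    refine Finset.sum_congr rfl fun i _ => Finset.sum_congr rfl fun j _ => ?_
    rw [mul_assoc, ← mul_assoc (b i), ← hScentral _ (hS' j) (b i), mul_assoc]
  refine of_surp ?_ (surp_mul hW₀l hW₀r hh hh')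
  rw [hexpand]
  exact sum _ _ fun i _ => sum _ _ fun j _ =>
    mul_left hW₀l (hS i) (mul_left hW₀l (hS' j) (hb i j))

theorem of_mem_closure (hW₀l : ∀ w y : W, y ∈ W₀ → w * y ∈ W₀)
    (hW₀r : ∀ w y : W, y ∈ W₀ → y * w ∈ W₀) (hScentral : ∀ s ∈ S, ∀ w : W, s * w = w * s)
    (hone : SurpassesCombination W₀ S b 1) (hb : ∀ i j, SurpassesCombination W₀ S b (b i * b j))
    {T : Set W} (hT : ∀ t ∈ T, SurpassesCombination W₀ S b t) {w : W}
    (hw : w ∈ Subsemiring.closure T) : SurpassesCombination W₀ S b w := by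
  induction hw using Subsemiring.closure_induction with
  | mem t ht => exact hT t ht
  | zero => exact zero
  | one => exact hone
  | add _ _ _ _ hx hy => exact add hx hy
  | mul _ _ _ _ hx hy => exact mul hW₀l hW₀r hScentral hb hx hy

end SurpassesCombination

theorem exists_finset_forall_surpassesCombination (T : Finset W)
    (hT : ∀ t ∈ T, SurpassesCombination W₀ S b t) :
    ∃ F : Finset W, ↑F ⊆ (S : Set W) ∧
      ∀ t ∈ T, SurpassesCombination W₀ (Subsemiring.closure ↑F) b t := by
  classical
  choose h hS hh using hT
  refine ⟨T.attach.biUnion fun t => Finset.univ.image (h t.1 t.2), ?_, fun t ht => ?_⟩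
  · intro x hx
    simp only [Finset.coe_biUnion, Finset.coe_image, Finset.coe_univ, Set.image_univ,
      Set.mem_iUnion, Set.mem_range] at hx
    obtain ⟨⟨t, ht⟩, _, i, rfl⟩ := hx
    exact hS t ht i
  · refine ⟨h t ht, fun i => Subsemiring.subset_closure ?_, hh t ht⟩
    simp only [Finset.coe_biUnion, Finset.coe_image, Finset.coe_univ, Set.image_univ,
      Set.mem_iUnion, Set.mem_range]
    exact ⟨⟨t, ht⟩, Finset.mem_coe.2 (Finset.mem_attach _ _), i, rfl⟩

theorem exists_mem_surp_of_forall_surpassesCombination {K : Subsemiring W} (hSK : S ≤ K)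
    (hindep : ∀ k k' : ι → W, (∀ i, k i ∈ K) → (∀ i, k' i ∈ K) →
      surp W₀ (∑ i, k i * b i) (∑ i, k' i * b i) → ∀ i, surp W₀ (k i) (k' i))
    (hall : ∀ w, SurpassesCombination W₀ S b w) {k : W} (hk : k ∈ K) :
    ∃ h ∈ S, surp W₀ h k := by
  classical
  rcases isEmpty_or_nonempty ι with _ | ⟨⟨i₀⟩⟩
  · obtain ⟨_, _, hsurp⟩ := hall k
    exact ⟨0, zero_mem S, by simpa using hsurp⟩
  obtain ⟨h, hS, hh⟩ := hall (k * b i₀)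
  have hsingle : ∑ i, (Pi.single i₀ k : ι → W) i * b i = k * b i₀ := by
    simp only [← Pi.single_mul_left_apply, Finset.sum_pi_single', Finset.mem_univ, if_true]
  have hcoeff := hindep h (Pi.single i₀ k) (fun i => hSK (hS i))
    (fun i => by by_cases hi : i = i₀ <;> simp [hi, hk]) (hsingle ▸ hh) i₀
  exact ⟨h i₀, hS i₀, by simpa using hcoeff⟩

end Combination

/-- (Artin–Tate for pairs.) If `W` is affine over `A`, and `W` has a finite
`(⪯)`-base over a central sub-semiring `K ⊇ A`, then `K` is affine over `A`. -/
theorem artin_tate_for_pairs {W : Type*} [Semiring W]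
    (W₀ : AddSubmonoid W)
    (hW₀l : ∀ w y : W, y ∈ W₀ → w * y ∈ W₀)
    (hW₀r : ∀ w y : W, y ∈ W₀ → y * w ∈ W₀)
    (A K : Subsemiring W) (hAK : A ≤ K)
    (hKcentral : ∀ k ∈ K, ∀ w : W, k * w = w * k)
    -- (1) W is affine over A
    (n : ℕ) (y : Fin n → W)
    (haffine : ∀ w : W, ∃ p ∈ Subsemiring.closure ((A : Set W) ∪ Set.range y),
      surp W₀ p w)
    -- (2) W has a finite (⪯)-base b over K
    (m : ℕ) (b : Fin m → W)
    (hspan : ∀ w : W, ∃ k : Fin m → W, (∀ i, k i ∈ K) ∧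
      surp W₀ (∑ i, k i * b i) w)
    (hindep : ∀ k k' : Fin m → W, (∀ i, k i ∈ K) → (∀ i, k' i ∈ K) →
      surp W₀ (∑ i, k i * b i) (∑ i, k' i * b i) → ∀ i, surp W₀ (k i) (k' i)) :
    ∃ F : Finset W, ↑F ⊆ (K : Set W) ∧
      ∀ k ∈ K, ∃ h ∈ Subsemiring.closure ((A : Set W) ∪ ↑F), surp W₀ h k := by
  classical
  let T : Finset W := insert 1 (Finset.univ.image y ∪
    Finset.univ.image fun p : Fin m × Fin m => b p.1 * b p.2)
  obtain ⟨F, hFK, hF⟩ := exists_finset_forall_surpassesCombination T fun w _ => hspan w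
  let S := Subsemiring.closure ((A : Set W) ∪ ↑F)
  have hSK : S ≤ K := Subsemiring.closure_le.2 (Set.union_subset hAK hFK)
  have hTS : ∀ t ∈ T, SurpassesCombination W₀ S b t := fun t ht =>
    (hF t ht).mono (Subsemiring.closure_mono Set.subset_union_right)
  have hone : SurpassesCombination W₀ S b 1 := hTS 1 (by simp [T])
  have hall : ∀ w, SurpassesCombination W₀ S b w := fun w => by
    obtain ⟨p, hp, hpw⟩ := haffine w
    refine SurpassesCombination.of_surp ?_ hpw
    refine .of_mem_closure hW₀l hW₀r (fun s hs => hKcentral s (hSK hs)) hone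
      (fun i j => hTS _ (by simp [T])) ?_ hp
    rintro t (ha | ⟨j, rfl⟩)
    · exact .of_mem hW₀l hone (Subsemiring.subset_closure (Or.inl ha))
    · exact hTS _ (by simp [T])
  exact ⟨F, hFK, fun k hk => exists_mem_surp_of_forall_surpassesCombination hSK hindep hall hk⟩
end
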